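/- arXiv:math/0407421 — 5 statements merged into one kernel-verified Lean document; each statement's English description precedes it below -/
import Mathlib

section
/- Let d ≥ 1 and h ≥ 1 be integers, and let v be a positive integer all of whose prime factors divide d. Then the sum over squarefree divisors α of d of μ(α)·gcd(αv,h)/(α·gcd(v,h)) equals φ(d)/d if ν_p(v) ≥ ν_p(h) for every prime p dividing d, and equals 0 otherwise. -/
open ArithmeticFunction
open scoped Classical

/-!
Writing `g = gcd(v, h)`, one has `gcd(αv, h) = g · gcd(α, h/g)`, so the sum is
`∑_{α ∣ d} μ(α) f(α)` for the multiplicative function `f(α) = gcd(α, h/g)/α`, which equals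
`∏_{p ∣ d} (1 - gcd(p, h/g)/p)`. A factor vanishes exactly when some `p ∣ d` divides `h/g`,
i.e. when `ν_p(v) < ν_p(h)`; otherwise every factor is `1 - 1/p` and the product is `φ(d)/d`.
-/

theorem Nat.gcd_mul_eq_gcd_mul_gcd_div_gcd (m v h : ℕ) :
    (m * v).gcd h = v.gcd h * m.gcd (h / v.gcd h) := by
  rcases Nat.eq_zero_or_pos (v.gcd h) with hg | hg
  · obtain ⟨rfl, rfl⟩ := Nat.gcd_eq_zero_iff.mp hg
    simp
  obtain ⟨v', h', hcop, hv, hh⟩ := Nat.exists_coprime v h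
  set g := v.gcd h
  rw [hv, hh, Nat.mul_div_cancel _ hg, ← mul_assoc, Nat.gcd_mul_right,
    hcop.gcd_mul_right_cancel, mul_comm]

theorem Nat.Prime.dvd_div_gcd_iff {p v h : ℕ} (hp : p.Prime) (hv : v ≠ 0) (hh : h ≠ 0) :
    p ∣ h / v.gcd h ↔ v.factorization p < h.factorization p := by
  have hg : v.gcd h ≠ 0 := Nat.gcd_ne_zero_right hh
  have hq : h / v.gcd h ≠ 0 :=
    (Nat.div_pos (Nat.gcd_le_right _ (Nat.pos_of_ne_zero hh)) (Nat.pos_of_ne_zero hg)).ne'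
  rw [hp.dvd_iff_one_le_factorization hq, Nat.factorization_div (Nat.gcd_dvd_right v h),
    Nat.factorization_gcd hv hh]
  simp only [Finsupp.coe_tsub, Pi.sub_apply, Finsupp.inf_apply]
  omega

theorem Nat.coprime_div_gcd_iff_factorization_le {v h : ℕ} (hv : v ≠ 0) (hh : h ≠ 0) (d : ℕ) :
    d.Coprime (h / v.gcd h) ↔ ∀ p : ℕ, p.Prime → p ∣ d → h.factorization p ≤ v.factorization p := by
  constructor
  · exact fun hcop p hp hpd => not_lt.mp fun hlt =>
      Nat.Prime.not_coprime_iff_dvd.mpr ⟨p, hp, hpd, (hp.dvd_div_gcd_iff hv hh).mpr hlt⟩ hcop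
  · refine fun hle => Nat.coprime_of_dvd fun p hp hpd => ?_
    rw [hp.dvd_div_gcd_iff hv hh, not_lt]
    exact hle p hp hpd

namespace ArithmeticFunction

theorem IsMultiplicative.sum_divisors_moebius_mul {R : Type*} [CommRing R]
    {f : ArithmeticFunction R} (hf : f.IsMultiplicative) {n : ℕ} (hn : n ≠ 0) :
    ∑ d ∈ n.divisors, (moebius d : R) * f d = ∏ p ∈ n.primeFactors, (1 - f p) := by
  rw [← Nat.primeFactors_radical,
    hf.prodPrimeFactors_one_sub_of_squarefree f UniqueFactorizationMonoid.squarefree_radical]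
  refine (Finset.sum_subset (Nat.divisors_subset_of_dvd hn
    UniqueFactorizationMonoid.radical_dvd_self) fun d hd hd' => ?_).symm
  have : ¬ Squarefree d := fun hsq => hd' <| Nat.mem_divisors.mpr
    ⟨(UniqueFactorizationMonoid.dvd_radical_iff hsq.isRadical hn).mpr (Nat.dvd_of_mem_divisors hd),
      UniqueFactorizationMonoid.radical_ne_zero⟩
  simp [moebius_eq_zero_of_not_squarefree this]

noncomputable def gcdDiv (n : ℕ) : ArithmeticFunction ℚ :=
  ⟨fun a => (a.gcd n : ℚ) / a, by simp⟩

@[simp]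
theorem gcdDiv_apply (n a : ℕ) : gcdDiv n a = (a.gcd n : ℚ) / a := rfl

theorem isMultiplicative_gcdDiv (n : ℕ) : (gcdDiv n).IsMultiplicative := by
  refine ⟨by simp, fun {a b} hab => ?_⟩
  simp only [gcdDiv_apply, Nat.gcd_comm _ n, hab.gcd_mul n, Nat.cast_mul, mul_div_mul_comm]

end ArithmeticFunction

theorem sum_divisors_moebius_mul_gcd_div {d : ℕ} (hd : d ≠ 0) (n : ℕ) :
    ∑ α ∈ d.divisors, (moebius α : ℚ) * (α.gcd n / α)
      = if d.Coprime n then (Nat.totient d : ℚ) / d else 0 := by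
  have hprod := (isMultiplicative_gcdDiv n).sum_divisors_moebius_mul hd
  simp only [gcdDiv_apply] at hprod
  rw [hprod]
  split_ifs with hcop
  · have hfactor : ∀ p ∈ d.primeFactors, 1 - ((p.gcd n : ℕ) : ℚ) / p = 1 - (p : ℚ)⁻¹ := by
      intro p hp
      rw [Nat.Coprime.gcd_eq_one (hcop.coprime_dvd_left (Nat.dvd_of_mem_primeFactors hp)),
        Nat.cast_one, one_div]
    rw [Finset.prod_congr rfl hfactor, Nat.totient_eq_mul_prod_factors,
      mul_div_cancel_left₀ _ (Nat.cast_ne_zero.mpr hd)]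
  · obtain ⟨p, hp, hpd, hpn⟩ := Nat.Prime.not_coprime_iff_dvd.mp hcop
    refine Finset.prod_eq_zero (Nat.mem_primeFactors.mpr ⟨hp, hpd, hd⟩) ?_
    rw [Nat.gcd_eq_left hpn, div_self (Nat.cast_ne_zero.mpr hp.ne_zero), sub_self]

theorem inner_sum_eval_general (d h v : ℕ) (hd : 1 ≤ d) (hh : 1 ≤ h) (hv : 0 < v) :
    ∑ α ∈ d.divisors, (moebius α : ℚ) * Nat.gcd (α * v) h / (α * Nat.gcd v h)
      = if ∀ p : ℕ, p.Prime → p ∣ d → h.factorization p ≤ v.factorization p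
        then (Nat.totient d : ℚ) / d else 0 := by
  have hg : (v.gcd h : ℚ) ≠ 0 := by exact_mod_cast Nat.gcd_ne_zero_right (by omega)
  have hsummand : ∀ α : ℕ, (moebius α : ℚ) * Nat.gcd (α * v) h / (α * Nat.gcd v h)
      = moebius α * ((α.gcd (h / v.gcd h) : ℚ) / α) := by
    intro α
    rw [Nat.gcd_mul_eq_gcd_mul_gcd_div_gcd, Nat.cast_mul]
    field_simp
  simp only [hsummand, sum_divisors_moebius_mul_gcd_div (by omega : d ≠ 0),
    Nat.coprime_div_gcd_iff_factorization_le hv.ne' (by omega : h ≠ 0)]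

theorem inner_sum_eval (d h v : ℕ) (hd : 1 ≤ d) (hh : 1 ≤ h) (hv : 0 < v)
    (hvd : ∀ q : ℕ, q.Prime → q ∣ v → q ∣ d) :
    ∑ α ∈ d.divisors, (moebius α : ℚ) * Nat.gcd (α * v) h / (α * Nat.gcd v h)
      = if ∀ p : ℕ, p.Prime → p ∣ d → h.factorization p ≤ v.factorization p
        then (Nat.totient d : ℚ) / d else 0 :=
  inner_sum_eval_general d h v hd hh hv
end

section
/- Let d ≥ 2 and z ≥ 3. Then ∑_{v > z, v | d^∞} 1/v ≪_d (log z)^{ω(d)}/z, i.e., there is a constant C depending only on d such that the sum over integers v > z with all prime factors dividing d of 1/v is at most C(log z)^{ω(d)}/z. -/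
open scoped Classical

/-!
Rankin's trick: for `v > z` and `0 < σ ≤ 1` we have `1/v ≤ z^(σ-1) v^(-σ)`, so the tail is at most
`z^(σ-1) ∑_{v ∣ d^∞} v^(-σ) = z^(σ-1) ∏_{p ∣ d} (1 - p^(-σ))⁻¹`. Taking `σ = 1/log z` gives
`z^(σ-1) = e/z`, and each Euler factor is at most `1 + log z / log p ≪ log z`, since
`1 - e^(-x) ≥ x/(1+x)`.
-/

open Real Finset

noncomputable def rpowNegHom (σ : ℝ) : ℕ →* ℝ where
  toFun n := (n : ℝ) ^ (-σ)
  map_one' := by simp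
  map_mul' m n := by
    push_cast
    exact mul_rpow (Nat.cast_nonneg m) (Nat.cast_nonneg n)

theorem hasSum_indicator_factoredNumbers_rpow_neg (s : Finset ℕ) {σ : ℝ} (hσ : 0 < σ) :
    HasSum ((Nat.factoredNumbers s).indicator fun n : ℕ ↦ (n : ℝ) ^ (-σ))
      (∏ p ∈ s with p.Prime, (1 - (p : ℝ) ^ (-σ))⁻¹) := by
  refine hasSum_subtype_iff_indicator.mp
    (EulerProduct.summable_and_hasSum_factoredNumbers_prod_filter_prime_geometric
      (f := rpowNegHom σ) (fun {p} hp ↦ ?_) s).2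
  show ‖(p : ℝ) ^ (-σ)‖ < 1
  rw [norm_of_nonneg (by positivity)]
  exact rpow_lt_one_of_one_lt_of_neg (by exact_mod_cast hp.one_lt) (by linarith)

theorem inv_le_rpow_sub_one_mul_rpow_neg {z v σ : ℝ} (hz : 0 < z) (hzv : z ≤ v) (hσ : σ ≤ 1) :
    v⁻¹ ≤ z ^ (σ - 1) * v ^ (-σ) := by
  have hv : 0 < v := hz.trans_le hzv
  calc v⁻¹ = v ^ (σ - 1) * v ^ (-σ) := by
        rw [← rpow_add hv, show σ - 1 + -σ = -1 by ring, rpow_neg_one]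
    _ ≤ z ^ (σ - 1) * v ^ (-σ) :=
        mul_le_mul_of_nonneg_right (rpow_le_rpow_of_nonpos hz hzv (by linarith)) (by positivity)

theorem tsum_ite_lt_inv_le_of_hasSum {S : Set ℕ} [DecidablePred (· ∈ S)] {z σ a : ℝ}
    (hz : 0 < z) (hσ : σ ≤ 1)
    (h : HasSum (S.indicator fun n : ℕ ↦ (n : ℝ) ^ (-σ)) a) :
    ∑' v : ℕ, (if z < v ∧ v ∈ S then (v : ℝ)⁻¹ else 0) ≤ z ^ (σ - 1) * a := by
  have hle : ∀ v : ℕ, (if z < v ∧ v ∈ S then (v : ℝ)⁻¹ else 0)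
      ≤ z ^ (σ - 1) * S.indicator (fun n : ℕ ↦ (n : ℝ) ^ (-σ)) v := by
    intro v
    split_ifs with hv
    · rw [Set.indicator_of_mem hv.2]
      exact inv_le_rpow_sub_one_mul_rpow_neg hz hv.1.le hσ
    · exact mul_nonneg (by positivity) (Set.indicator_nonneg (fun n _ ↦ by positivity) v)
  have hsum : Summable fun v : ℕ ↦ if z < v ∧ v ∈ S then (v : ℝ)⁻¹ else 0 :=
    (h.summable.mul_left _).of_nonneg_of_le (fun v ↦ by split_ifs <;> positivity) hle
  exact hasSum_le hle hsum.hasSum (h.mul_left _)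

theorem inv_one_sub_exp_neg_le {x : ℝ} (hx : 0 < x) : (1 - exp (-x))⁻¹ ≤ 1 + x⁻¹ := by
  have hexp : exp (-x) ≤ (1 + x)⁻¹ := by
    rw [exp_neg]
    exact inv_anti₀ (by positivity) (by linarith [add_one_le_exp x])
  have hlow : x / (1 + x) ≤ 1 - exp (-x) := by
    have : x / (1 + x) = 1 - (1 + x)⁻¹ := by field_simp; ring
    linarith
  calc (1 - exp (-x))⁻¹ ≤ (x / (1 + x))⁻¹ := inv_anti₀ (by positivity) hlow
    _ = 1 + x⁻¹ := by field_simp; ring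

theorem inv_one_sub_rpow_neg_le {p σ : ℝ} (hp : 1 < p) (hσ : 0 < σ) :
    (1 - p ^ (-σ))⁻¹ ≤ 1 + (σ * log p)⁻¹ := by
  rw [rpow_def_of_pos (by linarith), show log p * -σ = -(σ * log p) by ring]
  exact inv_one_sub_exp_neg_le (mul_pos hσ (log_pos hp))

theorem rpow_inv_log_sub_one {z : ℝ} (hz : 1 < z) : z ^ ((log z)⁻¹ - 1) = exp 1 / z := by
  rw [rpow_sub (by linarith), rpow_one, rpow_def_of_pos (by linarith),
    mul_inv_cancel₀ (log_pos hz).ne']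

theorem tsum_inv_factoredNumbers_gt_le (s : Finset ℕ) {z : ℝ} (hz : exp 1 ≤ z) :
    ∑' v : ℕ, (if z < v ∧ v ∈ Nat.factoredNumbers s then (v : ℝ)⁻¹ else 0)
      ≤ exp 1 * ((1 + (log 2)⁻¹) * log z) ^ #{p ∈ s | p.Prime} / z := by
  have hz1 : 1 < z := (one_lt_exp_iff.mpr one_pos).trans_le hz
  have hlog : 1 ≤ log z := by rwa [le_log_iff_exp_le (by linarith)]
  have hσ : 0 < (log z)⁻¹ := by positivity
  have hfactor : ∀ p ∈ {p ∈ s | p.Prime},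
      (1 - (p : ℝ) ^ (-(log z)⁻¹))⁻¹ ≤ (1 + (log 2)⁻¹) * log z := by
    intro p hp
    have hp2 : (2 : ℝ) ≤ p := by exact_mod_cast (mem_filter.mp hp).2.two_le
    have hlogp : log 2 ≤ log p := log_le_log two_pos hp2
    calc (1 - (p : ℝ) ^ (-(log z)⁻¹))⁻¹ ≤ 1 + ((log z)⁻¹ * log p)⁻¹ :=
          inv_one_sub_rpow_neg_le (by linarith) hσ
      _ = 1 + log z / log p := by rw [mul_inv, inv_inv, div_eq_mul_inv]
      _ ≤ log z + log z / log 2 := by gcongr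
      _ = (1 + (log 2)⁻¹) * log z := by ring
  calc _ ≤ z ^ ((log z)⁻¹ - 1) * ∏ p ∈ s with p.Prime, (1 - (p : ℝ) ^ (-(log z)⁻¹))⁻¹ :=
        tsum_ite_lt_inv_le_of_hasSum (by linarith) (inv_le_one_of_one_le₀ hlog)
          (hasSum_indicator_factoredNumbers_rpow_neg s hσ)
    _ ≤ z ^ ((log z)⁻¹ - 1) * ∏ p ∈ s with p.Prime, (1 + (log 2)⁻¹) * log z := by
        gcongr with p hp
        · intro p hp
          have hp1 : (1 : ℝ) ≤ p := by exact_mod_cast (mem_filter.mp hp).2.one_le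
          exact inv_nonneg.mpr <| sub_nonneg.mpr <|
            rpow_le_one_of_one_le_of_nonpos hp1 (neg_nonpos.mpr hσ.le)
        · exact hfactor p hp
    _ = _ := by rw [prod_const, rpow_inv_log_sub_one hz1]; ring

theorem smooth_tail_sum_bound (d : ℕ) (hd : 2 ≤ d) :
    ∃ C : ℝ, ∀ z : ℝ, 3 ≤ z →
      (∑' v : ℕ, if (z < (v : ℝ)) ∧ ∀ q : ℕ, q.Prime → q ∣ v → q ∣ d then (v : ℝ)⁻¹ else 0)
        ≤ C * (Real.log z) ^ d.primeFactors.card / z := by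
  refine ⟨exp 1 * (1 + (log 2)⁻¹) ^ d.primeFactors.card, fun z hz ↦ ?_⟩
  have hsmooth : ∀ v : ℕ,
      (∀ q : ℕ, q.Prime → q ∣ v → q ∣ d) ↔ v ∈ Nat.factoredNumbers d.primeFactors := by
    intro v
    simp +contextual [Nat.mem_factoredNumbers',
      Nat.mem_primeFactors_of_ne_zero (by omega : d ≠ 0)]
  have hprime : {p ∈ d.primeFactors | p.Prime} = d.primeFactors :=
    filter_true_of_mem fun p hp ↦ Nat.prime_of_mem_primeFactors hp
  simp only [hsmooth]
  calc _ ≤ _ := tsum_inv_factoredNumbers_gt_le _ (by linarith [exp_one_lt_d9])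
    _ = _ := by rw [hprime, mul_pow]; ring
end

section
/- Let g > 1 be a rational number (g ∉ {−1,0,1}) and d a positive integer with d ≡ 2 (mod 4). Then for odd primes p not dividing the numerator or denominator of g: d divides ord_p(−g) if and only if exactly one of the following holds: (i) d/2 divides ord_p(g) and d does not divide ord_p(g), or (ii) 2d divides ord_p(g). Consequently the number of primes p ≤ x with d | ord_p(−g) equals N_g(d/2)(x) + N_g(2d)(x) − N_g(d)(x) + O(1). -/
/-!
In a domain of characteristic `≠ 2`, `-1` is the only element of order `2`. Hence for `u` of
order `n`, the element `-u` has order `2n` if `n` is odd, order `n / 2` if `n ≡ 2 mod 4`, and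
order `n` if `4 ∣ n`; in particular `ord(-u)` is odd exactly when `n ≡ 2 mod 4`, while
`ord(±u)` divide twice each other and so share their odd divisors. Writing `d = 2m` with `m` odd,
`d ∣ ord(-u) ↔ m ∣ n ∧ n ≢ 2 mod 4`, and this is the exclusive disjunction of the statement.
Applied to `u = g mod p`, it gives `[d ∣ ord(-g)] + [d ∣ ord g] = [d/2 ∣ ord g] + [2d ∣ ord g]`
for every odd prime `p`; summing over `p ≤ x`, only the term `p = 2` survives.
-/

open scoped Classical

/-- The multiplicative order of the rational number `g` modulo `p`. -/
noncomputable def ordp (p : ℕ) (g : ℚ) : ℕ :=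
  orderOf ((g.num : ZMod p) * (g.den : ZMod p)⁻¹)

/-- `Ncount g d x` is the number of primes `p ≤ x` with `ν_p(g) = 0` such that
`d` divides the multiplicative order of `g` modulo `p`. -/
noncomputable def Ncount (g : ℚ) (d : ℕ) (x : ℕ) : ℕ :=
  ((Finset.range (x + 1)).filter
    (fun p : ℕ => p.Prime ∧ ¬ (p : ℤ) ∣ g.num ∧ ¬ p ∣ g.den ∧ d ∣ ordp p g)).card

open Finset

lemma Nat.Coprime.mul_dvd_iff {a b n : ℕ} (h : a.Coprime b) : a * b ∣ n ↔ a ∣ n ∧ b ∣ n :=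
  ⟨fun hab => ⟨dvd_of_mul_right_dvd hab, dvd_of_mul_left_dvd hab⟩,
    fun hab => h.mul_dvd_of_dvd_of_dvd hab.1 hab.2⟩

section ModFourEqTwo

variable {d : ℕ} (hd : d % 4 = 2)
include hd

lemma odd_div_two_of_mod_four_eq_two : Odd (d / 2) :=
  Nat.odd_iff.2 (by omega)

lemma dvd_iff_two_dvd_and_div_two_dvd (n : ℕ) : d ∣ n ↔ 2 ∣ n ∧ d / 2 ∣ n := by
  rw [← (Nat.coprime_two_left.2 (odd_div_two_of_mod_four_eq_two hd)).mul_dvd_iff,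
    Nat.mul_div_cancel' (by omega)]

lemma two_mul_dvd_iff_four_dvd_and_div_two_dvd (n : ℕ) :
    2 * d ∣ n ↔ 4 ∣ n ∧ d / 2 ∣ n := by
  rw [show 2 * d = 2 ^ 2 * (d / 2) by omega]
  exact ((Nat.coprime_two_left.2 (odd_div_two_of_mod_four_eq_two hd)).pow_left 2).mul_dvd_iff

lemma xor_dvd_iff_of_mod_four_eq_two (n : ℕ) :
    Xor (d / 2 ∣ n ∧ ¬ d ∣ n) (2 * d ∣ n) ↔ d / 2 ∣ n ∧ n % 4 ≠ 2 := by
  rw [dvd_iff_two_dvd_and_div_two_dvd hd, two_mul_dvd_iff_four_dvd_and_div_two_dvd hd,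
    Nat.dvd_iff_mod_eq_zero (n := n), Nat.dvd_iff_mod_eq_zero (n := n), xor_def]
  omega

end ModFourEqTwo

section OrderOfNeg

lemma orderOf_neg_dvd_two_mul {M : Type*} [Monoid M] [HasDistribNeg M] (u : M) :
    orderOf (-u) ∣ 2 * orderOf u :=
  orderOf_dvd_of_pow_eq_one <| by
    rw [Even.neg_pow (even_two_mul _), pow_mul', pow_orderOf_eq_one, one_pow]

lemma Odd.dvd_orderOf_neg_iff {M : Type*} [Monoid M] [HasDistribNeg M] {m : ℕ} (hm : Odd m)
    (u : M) : m ∣ orderOf (-u) ↔ m ∣ orderOf u := by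
  have hcop : m.Coprime 2 := (Nat.coprime_two_left.2 hm).symm
  have h_neg_neg := orderOf_neg_dvd_two_mul (-u)
  rw [neg_neg] at h_neg_neg
  exact ⟨fun h => hcop.dvd_of_dvd_mul_left (h.trans (orderOf_neg_dvd_two_mul u)),
    fun h => hcop.dvd_of_dvd_mul_left (h.trans h_neg_neg)⟩

variable {R : Type*} [CommRing R] [IsDomain R]

lemma orderOf_neg_of_odd (hR : ringChar R ≠ 2) {u : R} (hu : Odd (orderOf u)) :
    orderOf (-u) = 2 * orderOf u := by
  have hneg_one : orderOf (-1 : R) = 2 := by rw [orderOf_neg_one, if_neg hR]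
  rw [neg_eq_neg_one_mul, (Commute.all _ _).orderOf_mul_eq_mul_orderOf_of_coprime
    (by rwa [hneg_one, Nat.coprime_two_left]), hneg_one]

lemma odd_orderOf_neg_iff (hR : ringChar R ≠ 2) (u : R) :
    Odd (orderOf (-u)) ↔ orderOf u % 4 = 2 := by
  constructor
  · intro h
    have h_order := orderOf_neg_of_odd hR h
    rw [neg_neg] at h_order
    obtain ⟨k, hk⟩ := h
    omega
  · intro h
    obtain ⟨k, hk, hk_odd⟩ : ∃ k, orderOf u = 2 * k ∧ Odd k :=
      ⟨orderOf u / 2, by omega, Nat.odd_iff.2 (by omega)⟩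
    have hpow : u ^ k = -1 := by
      have h_prim := (IsPrimitiveRoot.orderOf u).pow_of_dvd (by omega) (hk ▸ dvd_mul_left k 2)
      rw [hk, Nat.mul_div_cancel _ (by omega)] at h_prim
      exact h_prim.eq_neg_one_of_two_right
    refine hk_odd.of_dvd_nat (orderOf_dvd_of_pow_eq_one ?_)
    rw [hk_odd.neg_pow, hpow, neg_neg]

lemma dvd_orderOf_neg_iff (hR : ringChar R ≠ 2) {d : ℕ} (hd : d % 4 = 2) (u : R) :
    d ∣ orderOf (-u) ↔ Xor (d / 2 ∣ orderOf u ∧ ¬ d ∣ orderOf u) (2 * d ∣ orderOf u) :=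
  calc d ∣ orderOf (-u) ↔ 2 ∣ orderOf (-u) ∧ d / 2 ∣ orderOf (-u) :=
        dvd_iff_two_dvd_and_div_two_dvd hd _
    _ ↔ ¬ Odd (orderOf (-u)) ∧ d / 2 ∣ orderOf u := by
        rw [Nat.not_odd_iff_even, even_iff_two_dvd,
          (odd_div_two_of_mod_four_eq_two hd).dvd_orderOf_neg_iff]
    _ ↔ d / 2 ∣ orderOf u ∧ orderOf u % 4 ≠ 2 := by rw [odd_orderOf_neg_iff hR, and_comm]
    _ ↔ Xor (d / 2 ∣ orderOf u ∧ ¬ d ∣ orderOf u) (2 * d ∣ orderOf u) :=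
        (xor_dvd_iff_of_mod_four_eq_two hd _).symm

end OrderOfNeg

lemma ordp_neg (p : ℕ) (g : ℚ) :
    ordp p (-g) = orderOf (-((g.num : ZMod p) * (g.den : ZMod p)⁻¹)) := by
  rw [ordp, Rat.num_neg_eq_neg_num, Rat.den_neg_eq_den, Int.cast_neg, neg_mul]

lemma dvd_ordp_neg_iff {p : ℕ} (hp : p.Prime) (hp2 : p ≠ 2) {d : ℕ} (hd : d % 4 = 2) (g : ℚ) :
    d ∣ ordp p (-g) ↔ Xor (d / 2 ∣ ordp p g ∧ ¬ d ∣ ordp p g) (2 * d ∣ ordp p g) := by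
  have := Fact.mk hp
  rw [ordp_neg]
  exact dvd_orderOf_neg_iff (by rwa [ZMod.ringChar_zmod_n]) hd _

noncomputable def ncountTerm (g : ℚ) (d p : ℕ) : ℝ :=
  if p.Prime ∧ ¬ (p : ℤ) ∣ g.num ∧ ¬ p ∣ g.den ∧ d ∣ ordp p g then 1 else 0

lemma Ncount_eq_sum_ncountTerm (g : ℚ) (d x : ℕ) :
    (Ncount g d x : ℝ) = ∑ p ∈ range (x + 1), ncountTerm g d p :=
  natCast_card_filter _ _

lemma ite_xor_add_ite {M : Type*} [AddMonoidWithOne M] {a b c : Prop} [Decidable a]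
    [Decidable b] [Decidable c] (hcb : c → b) (hba : b → a) :
    ((if Xor (a ∧ ¬ b) c then 1 else 0 : M) + if b then 1 else 0) =
      (if a then 1 else 0) + if c then 1 else 0 := by
  by_cases ha : a <;> by_cases hb : b <;> by_cases hc : c <;> simp_all [xor_def]

lemma ncountTerm_neg_add {p : ℕ} (hp2 : p ≠ 2) {d : ℕ} (hd : d % 4 = 2) (g : ℚ) :
    ncountTerm (-g) d p + ncountTerm g d p = ncountTerm g (d / 2) p + ncountTerm g (2 * d) p := by
  simp only [ncountTerm, Rat.num_neg_eq_neg_num, Rat.den_neg_eq_den, dvd_neg]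
  by_cases hgood : p.Prime ∧ ¬ (p : ℤ) ∣ g.num ∧ ¬ p ∣ g.den
  · obtain ⟨hp, hnum, hden⟩ := hgood
    simp only [hp, hnum, hden, not_false_eq_true, true_and, dvd_ordp_neg_iff hp hp2 hd]
    exact ite_xor_add_ite dvd_of_mul_left_dvd (Nat.div_dvd_of_dvd (by omega : 2 ∣ d)).trans
  · simp only [← and_assoc] at hgood ⊢
    simp only [hgood, false_and, if_false, add_zero]

lemma abs_sum_le_abs_of_eq_zero_of_ne {α : Type*} {s : Finset α} {f : α → ℝ} (a : α)
    (hf : ∀ b ∈ s, b ≠ a → f b = 0) : |∑ b ∈ s, f b| ≤ |f a| := by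
  by_cases ha : a ∈ s
  · rw [sum_eq_single_of_mem a ha hf]
  · rw [sum_eq_zero fun b hb => hf b hb (ne_of_mem_of_not_mem hb ha), abs_zero]
    exact abs_nonneg _

theorem neg_g_counting_general (g : ℚ) (d : ℕ) (hd2 : d % 4 = 2) :
    (∀ p : ℕ, p.Prime → Odd p → ¬ (p : ℤ) ∣ g.num → ¬ p ∣ g.den →
      (d ∣ ordp p (-g) ↔
        Xor' (d / 2 ∣ ordp p g ∧ ¬ d ∣ ordp p g) (2 * d ∣ ordp p g))) ∧
    ∃ C : ℝ, ∀ x : ℕ,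
      |(Ncount (-g) d x : ℝ) -
        ((Ncount g (d / 2) x : ℝ) + (Ncount g (2 * d) x : ℝ) - (Ncount g d x : ℝ))| ≤ C := by
  set defect : ℕ → ℝ := fun p =>
    ncountTerm (-g) d p + ncountTerm g d p - ncountTerm g (d / 2) p - ncountTerm g (2 * d) p
  refine ⟨fun p hp hp_odd _ _ => dvd_ordp_neg_iff hp (hp_odd.ne_two_of_dvd_nat dvd_rfl) hd2 g,
    |defect 2|, fun x => ?_⟩
  have hsum : (Ncount (-g) d x : ℝ) -
      ((Ncount g (d / 2) x : ℝ) + (Ncount g (2 * d) x : ℝ) - (Ncount g d x : ℝ)) =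
        ∑ p ∈ range (x + 1), defect p := by
    simp only [defect, Ncount_eq_sum_ncountTerm, sum_add_distrib, sum_sub_distrib]
    ring
  rw [hsum]
  refine abs_sum_le_abs_of_eq_zero_of_ne 2 fun p _ hp2 => ?_
  simp only [defect, ncountTerm_neg_add hp2 hd2]
  ring

theorem neg_g_counting (g : ℚ) (hg : 1 < g) (d : ℕ) (hd : 0 < d) (hd2 : d % 4 = 2) :
    (∀ p : ℕ, p.Prime → Odd p → ¬ (p : ℤ) ∣ g.num → ¬ p ∣ g.den →
      (d ∣ ordp p (-g) ↔
        Xor' (d / 2 ∣ ordp p g ∧ ¬ d ∣ ordp p g) (2 * d ∣ ordp p g))) ∧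
    ∃ C : ℝ, ∀ x : ℕ,
      |(Ncount (-g) d x : ℝ) -
        ((Ncount g (d / 2) x : ℝ) + (Ncount g (2 * d) x : ℝ) - (Ncount g d x : ℝ))| ≤ C :=
  neg_g_counting_general g d hd2
end

section
/- Let g be a rational number, g ∉ {−1,0,1}, with g > 0, and d a positive integer not congruent to 2 mod 4. Then for all odd primes p with ν_p(g)=0, d divides ord_p(−g) if and only if d divides ord_p(g), except for at most finitely many primes p (in fact with no exceptions when d is odd or 4 | d). -/
private lemma aux_neg_order {R : Type*} [CommRing R] (x : R) (d : ℕ)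
    (hd2 : d % 4 ≠ 2) (h : d ∣ orderOf (-x)) : d ∣ orderOf x := by
  have h2 : orderOf (-x) ∣ 2 * orderOf x := by
    apply orderOf_dvd_of_pow_eq_one
    rw [pow_mul, neg_sq, ← pow_mul, mul_comm, pow_mul, pow_orderOf_eq_one, one_pow]
  rcases Nat.even_or_odd d with hde | hdo
  · -- d even, so 4 ∣ d
    have h4d : 4 ∣ d := by
      obtain ⟨k, hk⟩ := hde; omega
    have h4 : 4 ∣ orderOf (-x) := h4d.trans h
    rcases Nat.even_or_odd (orderOf x) with hne | hno
    · have hdvd1 : orderOf (-x) ∣ orderOf x := by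
        apply orderOf_dvd_of_pow_eq_one
        rw [hne.neg_pow, pow_orderOf_eq_one]
      have hdvd2 : orderOf x ∣ orderOf (-x) := by
        apply orderOf_dvd_of_pow_eq_one
        have he : Even (orderOf (-x)) := (by omega : (2:ℕ) ∣ orderOf (-x)).elim
          fun k hk => ⟨k, by omega⟩
        rw [← he.neg_pow, pow_orderOf_eq_one]
      rw [Nat.dvd_antisymm hdvd1 hdvd2] at h
      exact h
    · exfalso
      have : (4:ℕ) ∣ 2 * orderOf x := h4.trans h2
      obtain ⟨k, hk⟩ := hno
      omega
  · -- d odd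
    have hcop : Nat.Coprime d 2 := hdo.coprime_two_right
    exact hcop.dvd_of_dvd_mul_left (h.trans h2)

theorem neg_g_order_dvd_iff (g : ℚ) (hg0 : 0 < g) (hg1 : g ≠ 1)
    (d : ℕ) (hd : 0 < d) (hd2 : d % 4 ≠ 2) :
    ∃ S : Finset ℕ, ∀ p : ℕ, p.Prime → Odd p →
      ¬ (p : ℤ) ∣ g.num → ¬ p ∣ g.den → p ∉ S →
      (d ∣ ordp p (-g) ↔ d ∣ ordp p g) := by
  refine ⟨∅, fun p _ _ _ _ _ => ?_⟩
  have hneg : ordp p (-g) = orderOf (-((g.num : ZMod p) * (g.den : ZMod p)⁻¹)) := by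
    unfold ordp
    rw [Rat.neg_num, Rat.neg_den, Int.cast_neg, neg_mul]
  rw [hneg]
  unfold ordp
  constructor
  · exact aux_neg_order _ d hd2
  · intro h
    apply aux_neg_order _ d hd2
    rwa [neg_neg]
end

section
/- Let d ≥ 1, h ≥ 1 and D a fundamental discriminant. If d is odd, or if D has an odd prime divisor not dividing d (equivalently D ∤ 4d), then the sum S_3(D) := ∑_{v | d^∞} ∑_{α | d, [2^{ν_2(hd/α)+1},D] | dv} μ(α)·gcd(αv,h)/(φ(dv)·α·v) equals 0. -/
open ArithmeticFunction
open scoped Classical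

/-- `D` is a fundamental discriminant (the discriminant of a quadratic field):
either `D ≡ 1 (mod 4)` and squarefree, or `D = 4m` with `m` squarefree and
`m ≡ 2, 3 (mod 4)`. -/
def IsFundamentalDiscriminant (D : ℤ) : Prop :=
  (D % 4 = 1 ∧ Squarefree D) ∨
  (∃ m : ℤ, D = 4 * m ∧ Squarefree m ∧ (m % 4 = 2 ∨ m % 4 = 3))

theorem S3_vanishes (d h : ℕ) (hd : 1 ≤ d) (hh : 1 ≤ h) (D : ℤ)
    (hD : IsFundamentalDiscriminant D)
    (hcase : Odd d ∨ ∃ q : ℕ, q.Prime ∧ Odd q ∧ (q : ℤ) ∣ D ∧ ¬ q ∣ d) :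
    (∑' v : ℕ, if 0 < v ∧ ∀ q : ℕ, q.Prime → q ∣ v → q ∣ d then
        ∑ α ∈ d.divisors,
          if Nat.lcm (2 ^ ((h * d / α).factorization 2 + 1)) D.natAbs ∣ d * v then
            (moebius α : ℝ) * Nat.gcd (α * v) h / (Nat.totient (d * v) * α * v)
          else 0
      else 0) = 0 := by
  have key : ∀ v : ℕ, (if 0 < v ∧ ∀ q : ℕ, q.Prime → q ∣ v → q ∣ d then
        ∑ α ∈ d.divisors,
          if Nat.lcm (2 ^ ((h * d / α).factorization 2 + 1)) D.natAbs ∣ d * v then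
            (moebius α : ℝ) * Nat.gcd (α * v) h / (Nat.totient (d * v) * α * v)
          else 0
      else 0) = 0 := by
    intro v
    split_ifs with hv
    · apply Finset.sum_eq_zero
      intro α hα
      rw [if_neg]
      intro hdvd
      rcases hcase with hodd | ⟨q, hq, hqodd, hqD, hqd⟩
      · have h2 : 2 ∣ d * v :=
          ((dvd_pow_self 2 (Nat.succ_ne_zero _)).trans (Nat.dvd_lcm_left _ _)).trans hdvd
        have hd2 : ¬ 2 ∣ d := hodd.not_two_dvd_nat
        rcases (Nat.Prime.dvd_mul Nat.prime_two).mp h2 with h | h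
        · exact hd2 h
        · exact hd2 (hv.2 2 Nat.prime_two h)
      · have hq1 : q ∣ D.natAbs := by
          have := Int.natAbs_dvd_natAbs.mpr hqD
          simpa using this
        have hq2 : q ∣ d * v := (hq1.trans (Nat.dvd_lcm_right _ _)).trans hdvd
        rcases (Nat.Prime.dvd_mul hq).mp hq2 with h | h
        · exact hqd h
        · exact hqd (hv.2 q hq h)
    · rfl
  simp only [key, tsum_zero]
end
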